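/- arXiv:2205.05000 — 3 statements merged into one kernel-verified Lean document; each statement's English description precedes it below -/
import Mathlib

section
/- Let N ∈ M_{n_a}, let i ≠ j be statuses and k a subset index with N_i^{(k)} > 0, and set M = N + E_j^{(k)} − E_i^{(k)}. Then ⟨Φ_M, Φ_M⟩ / ⟨Φ_N, Φ_N⟩ = N_i^{(k)} / (N_j^{(k)} + 1). -/
open MeasureTheory Finset Function

namespace ABMFormal

abbrev E (d : ℕ) : Type := EuclideanSpace ℝ (Fin d)
abbrev FS (d n_s n_a : ℕ) : Type := (Fin n_a → E d) → (Fin n_a → Fin n_s) → ℝ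

noncomputable def occ {d m n_s n_a : ℕ} (A : Fin m → Set (E d)) (X : Fin n_a → E d)
    (S : Fin n_a → Fin n_s) (i : Fin n_s) (k : Fin m) : ℕ :=
  Set.ncard {α : Fin n_a | X α ∈ A k ∧ S α = i}

noncomputable def Phi {d m n_s n_a : ℕ} (A : Fin m → Set (E d)) (N : Fin n_s → Fin m → ℤ)
    (X : Fin n_a → E d) (S : Fin n_a → Fin n_s) : ℝ :=
  if ∀ i k, ((occ A X S i k : ℕ) : ℤ) = N i k then 1 else 0

noncomputable def Mset (n_s m n_a : ℕ) : Finset (Fin n_s → Fin m → ℤ) :=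
  ((Finset.univ : Finset (Fin n_s → Fin m → Fin (n_a + 1))).image
      fun f i k => ((f i k : ℕ) : ℤ)).filter
    fun N => (∑ i, ∑ k, N i k) = (n_a : ℤ)

def posSet {d : ℕ} (Xdom : Set (E d)) (n_a : ℕ) : Set (Fin n_a → E d) :=
  Set.univ.pi fun _ => Xdom

noncomputable def ip {d n_s n_a : ℕ} (Xdom : Set (E d)) (f g : FS d n_s n_a) : ℝ :=
  (((volume Xdom).toReal * (n_s : ℝ)) ^ n_a)⁻¹ *
    ∑ S : Fin n_a → Fin n_s, ∫ X in posSet Xdom n_a, f X S * g X S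

def one (d n_s n_a : ℕ) : FS d n_s n_a := fun _ _ => 1

def Emat {n_s m : ℕ} (i : Fin n_s) (k : Fin m) : Fin n_s → Fin m → ℤ :=
  fun i' k' => if i' = i ∧ k' = k then 1 else 0

def deltaS {n_s : ℕ} (i s : Fin n_s) : ℝ := if s = i then 1 else 0

noncomputable def deltaA {d : ℕ} (A : Set (E d)) (x : E d) : ℝ :=
  A.indicator (fun _ => (1 : ℝ)) x

noncomputable def dr {d : ℕ} (r : ℝ) (x y : E d) : ℝ := if dist x y ≤ r then 1 else 0

/-- Transition rates `λ_i^{(kl)} = (∫_{A_l} ∫_{A_k} ℓ_i(x,y) dy dx) / μ(A_k)`. -/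
noncomputable def lam {d m n_s : ℕ} (A : Fin m → Set (E d)) (K : Fin n_s → E d → E d → ℝ)
    (i : Fin n_s) (k l : Fin m) : ℝ :=
  (∫ x in A l, ∫ y in A k, K i x y) / (volume (A k)).toReal

/-- The movement generator `(L p)(X, S) = ∑_α ∫_X ℓ_{s_α}(x_α, y) p(X^{α→y}, S) dy`. -/
noncomputable def Lop {d n_s n_a : ℕ} (Xdom : Set (E d)) (K : Fin n_s → E d → E d → ℝ)
    (p : FS d n_s n_a) : FS d n_s n_a :=
  fun X S => ∑ α, ∫ y in Xdom, K (S α) (X α) y * p (Function.update X α y) S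

/-- `γ_{ij}^{(k)} = (∫_{A_k} γ_{ij}(x) dx) / μ(A_k)`. -/
noncomputable def gammaK {d m n_s : ℕ} (A : Fin m → Set (E d)) (γ : Fin n_s → Fin n_s → E d → ℝ)
    (i j : Fin n_s) (k : Fin m) : ℝ :=
  (∫ x in A k, γ i j x) / (volume (A k)).toReal

/-- First-order adoption rate function `f_{ij}^{(α)}(X,S) = δ_i(s_α) γ_{ij}(x_α)`. -/
noncomputable def fFirst {d n_s n_a : ℕ} (γ : Fin n_s → Fin n_s → E d → ℝ) (i j : Fin n_s)
    (α : Fin n_a) (X : Fin n_a → E d) (S : Fin n_a → Fin n_s) : ℝ :=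
  deltaS i (S α) * γ i j (X α)

/-- Outflow part `G₁ p = (∑_{i,j,α} f_{ij}^{(α)}) p` of the first-order adoption generator. -/
noncomputable def G1First {d n_s n_a : ℕ} (γ : Fin n_s → Fin n_s → E d → ℝ)
    (p : FS d n_s n_a) : FS d n_s n_a :=
  fun X S => (∑ i, ∑ j, ∑ α, fFirst γ i j α X S) * p X S

/-- Inflow part `G₂ p (X,S) = ∑_{i,j,α} f_{ij}^{(α)}(X, S + i e_α − j e_α) p(X, S + i e_α − j e_α)`
of the first-order adoption generator.  Since in coordinatewise integer arithmetic
`δ_i(s_α + i − j) = δ_j(s_α)`, and then `S + i e_α − j e_α = Function.update S α i` lies in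
`S^{n_a}`, while all other summands vanish by the extension-by-zero convention, the term
equals `∑_{i,j,α} δ_j(s_α) γ_{ij}(x_α) p(X, update S α i)`. -/
noncomputable def G2First {d n_s n_a : ℕ} (γ : Fin n_s → Fin n_s → E d → ℝ)
    (p : FS d n_s n_a) : FS d n_s n_a :=
  fun X S => ∑ i, ∑ j, ∑ α, deltaS j (S α) * γ i j (X α) * p X (Function.update S α i)

/-- The first-order adoption generator `G = −G₁ + G₂`. -/
noncomputable def GopFirst {d n_s n_a : ℕ} (γ : Fin n_s → Fin n_s → E d → ℝ)
    (p : FS d n_s n_a) : FS d n_s n_a :=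
  fun X S => -(G1First γ p X S) + G2First γ p X S

/-- Second-order adoption rate function
`f_{ij}^{(α)}(X,S) = δ_i(s_α) ∑_{β ≠ α} δ_j(s_β) c_{ij} d_r(x_α, x_β)`. -/
noncomputable def fSecond {d n_s n_a : ℕ} (c : Fin n_s → Fin n_s → ℝ) (r : ℝ)
    (i j : Fin n_s) (α : Fin n_a) (X : Fin n_a → E d) (S : Fin n_a → Fin n_s) : ℝ :=
  deltaS i (S α) * ∑ β ∈ Finset.univ.erase α, deltaS j (S β) * (c i j * dr r (X α) (X β))

/-- Outflow part `G₁ p = (∑_{i,j,α} f_{ij}^{(α)}) p` of the second-order adoption generator. -/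
noncomputable def G1Second {d n_s n_a : ℕ} (c : Fin n_s → Fin n_s → ℝ) (r : ℝ)
    (p : FS d n_s n_a) : FS d n_s n_a :=
  fun X S => (∑ i, ∑ j, ∑ α, fSecond c r i j α X S) * p X S

/-- Inflow part of the second-order adoption generator, the term
`∑_{i,j,α} f_{ij}^{(α)}(X, S + i e_α − j e_α) p(X, S + i e_α − j e_α)`; as in the
first-order case the only non-vanishing summands are those with `s_α = j`, giving
`∑_{i,j,α} δ_j(s_α) (∑_{β ≠ α} δ_j(s_β) c_{ij} d_r(x_α,x_β)) p(X, update S α i)`. -/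
noncomputable def G2Second {d n_s n_a : ℕ} (c : Fin n_s → Fin n_s → ℝ) (r : ℝ)
    (p : FS d n_s n_a) : FS d n_s n_a :=
  fun X S => ∑ i, ∑ j, ∑ α, deltaS j (S α) *
    (∑ β ∈ Finset.univ.erase α, deltaS j (S β) * (c i j * dr r (X α) (X β))) *
    p X (Function.update S α i)

/-- The second-order adoption generator `G = −G₁ + G₂`. -/
noncomputable def GopSecond {d n_s n_a : ℕ} (c : Fin n_s → Fin n_s → ℝ) (r : ℝ)
    (p : FS d n_s n_a) : FS d n_s n_a :=
  fun X S => -(G1Second c r p X S) + G2Second c r p X S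

/-- `b_{kl} = (∫_{A_k} ∫_{A_l} d_r(x₁,x₂) dx₂ dx₁)/(μ(A_k) μ(A_l))`. -/
noncomputable def bOf {d m : ℕ} (A : Fin m → Set (E d)) (r : ℝ) (k l : Fin m) : ℝ :=
  (∫ x in A k, ∫ y in A l, dr r x y) / ((volume (A k)).toReal * (volume (A l)).toReal)

/-- The normalized ansatz functions `Φ̂_N = Φ_N / ⟨Φ_N, 𝟙⟩`. -/
noncomputable def Phihat {d m n_s n_a : ℕ} (Xdom : Set (E d)) (A : Fin m → Set (E d))
    (N : Fin n_s → Fin m → ℤ) : FS d n_s n_a :=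
  fun X S => Phi A N X S / ip Xdom (Phi (n_a := n_a) A N) (one d n_s n_a)

/-- The Galerkin projection `Q v = ∑_{N ∈ M_{n_a}} (⟨Φ_N, v⟩/⟨Φ_N, 𝟙⟩) Φ_N`. -/
noncomputable def Qproj {d m n_s n_a : ℕ} (Xdom : Set (E d)) (A : Fin m → Set (E d))
    (v : FS d n_s n_a) : FS d n_s n_a :=
  fun X S => ∑ N ∈ Mset n_s m n_a,
    (ip Xdom (Phi (n_a := n_a) A N) v / ip Xdom (Phi (n_a := n_a) A N) (one d n_s n_a)) *
      Phi A N X S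

/-- The matrix representation `Ĥ_{NM} = ⟨Φ_M, H Φ_N⟩ / ⟨Φ_N, 𝟙⟩` of a projected operator. -/
noncomputable def Hhat {d m n_s n_a : ℕ} (Xdom : Set (E d)) (A : Fin m → Set (E d))
    (H : FS d n_s n_a →ₗ[ℝ] FS d n_s n_a) (N M : Fin n_s → Fin m → ℤ) : ℝ :=
  ip Xdom (Phi (n_a := n_a) A M) (H (Phi A N)) / ip Xdom (Phi (n_a := n_a) A N) (one d n_s n_a)

/-! Integrating over positions cell by cell, `⟨Φ_N, Φ_N⟩` is, up to the normalising constant, the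
total weight `∑ ∏_α μ(A_{k_α})` of the ways to give each agent a (status, subset) pair with
occupation numbers `N`. Multiplying this weight by `N_i^{(k)}` amounts to marking one agent in
state `(i, k)`; switching the marked agent to `(j, k)` is a weight-preserving bijection onto the
assignments with occupation numbers `M` and a marked agent in state `(j, k)`, whose total weight
is that of `M` times `M_j^{(k)} = N_j^{(k)} + 1`. -/

section Configurations

variable {ι T : Type*} [Fintype ι] [DecidableEq T]

-- Integer-valued, so that it compares directly with the integer occupation matrices `N`.
def fiberCount (g : ι → T) (p : T) : ℤ := #{α | g α = p}

lemma fiberCount_apply_eq_sum (g : ι → T) (p : T) :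
    fiberCount g p = ∑ α, if g α = p then 1 else 0 := by
  simp [fiberCount]

lemma exists_fiberCount_eq [Fintype T] {a : T → ℤ} (ha : 0 ≤ a)
    (hsum : ∑ p, a p = Fintype.card ι) :
    ∃ g : ι → T, fiberCount g = a := by
  have hcard : Fintype.card ι = Fintype.card (Σ p : T, Fin (a p).toNat) := by
    rw [Fintype.card_sigma]
    simp only [Fintype.card_fin]
    zify
    rw [← hsum]
    exact Finset.sum_congr rfl fun p _ => (Int.toNat_of_nonneg (ha p)).symm
  obtain ⟨e⟩ := Fintype.card_eq.mp hcard
  refine ⟨fun α => (e α).1, funext fun p => ?_⟩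
  rw [fiberCount_apply_eq_sum, Equiv.sum_comp e (fun x => if x.1 = p then (1 : ℤ) else 0),
    ← Finset.univ_sigma_univ, Finset.sum_sigma]
  simp [apply_ite Finset.card]
  exact ha p

variable [DecidableEq ι]

lemma fiberCount_update (g : ι → T) (α : ι) (t : T) :
    fiberCount (update g α t) = fiberCount g + Pi.single t 1 - Pi.single (g α) 1 := by
  ext p
  simp only [fiberCount_apply_eq_sum, Pi.add_apply, Pi.sub_apply, Pi.single_apply]
  rw [← Finset.add_sum_erase _ _ (Finset.mem_univ α),
    ← Finset.add_sum_erase _ _ (Finset.mem_univ α)]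
  have hrest : ∑ β ∈ univ.erase α, (if update g α t β = p then (1 : ℤ) else 0)
      = ∑ β ∈ univ.erase α, if g β = p then 1 else 0 :=
    Finset.sum_congr rfl fun β hβ => by rw [update_of_ne (Finset.ne_of_mem_erase hβ)]
  rw [hrest, update_self]
  simp only [eq_comm (a := p)]
  ring

variable [Fintype T]

variable (ι) in
noncomputable def configWeight (w : T → ℝ) (a : T → ℤ) : ℝ :=
  ∑ g : ι → T, if fiberCount g = a then ∏ α, w (g α) else 0

lemma configWeight_pos {w : T → ℝ} (hw : ∀ p, 0 < w p) {a : T → ℤ} (ha : 0 ≤ a)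
    (hsum : ∑ p, a p = Fintype.card ι) : 0 < configWeight ι w a := by
  obtain ⟨g, hg⟩ := exists_fiberCount_eq ha hsum
  refine Finset.sum_pos' (fun g _ => ?_) ⟨g, Finset.mem_univ g, ?_⟩
  · split_ifs
    exacts [Finset.prod_nonneg fun α _ => (hw _).le, le_rfl]
  · rw [if_pos hg]
    exact Finset.prod_pos fun α _ => hw _

lemma configWeight_mul_apply (w : T → ℝ) (a : T → ℤ) (v : T) :
    configWeight ι w a * a v
      = ∑ x : (ι → T) × ι, if fiberCount x.1 = a ∧ x.1 x.2 = v then ∏ α, w (x.1 α) else 0 := by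
  rw [configWeight, Finset.sum_mul, Fintype.sum_prod_type]
  refine Finset.sum_congr rfl fun g _ => ?_
  split_ifs with hg
  · subst hg
    rw [fiberCount_apply_eq_sum g v]
    push_cast
    rw [Finset.mul_sum]
    simp
  · simp [hg]

lemma configWeight_shift_mul {u v : T} (huv : u ≠ v) {w : T → ℝ} (hw : w u = w v)
    (b : T → ℤ) :
    configWeight ι w (b + Pi.single u 1 - Pi.single v 1) * (b u + 1)
      = configWeight ι w b * b v := by
  have hu : ((b u : ℝ) + 1) = ((b + Pi.single u 1 - Pi.single v 1 : T → ℤ) u : ℤ) := by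
    simp [huv]
  rw [hu, configWeight_mul_apply, configWeight_mul_apply, ← Finset.sum_filter,
    ← Finset.sum_filter]
  refine Finset.sum_nbij' (fun x => (update x.1 x.2 v, x.2)) (fun x => (update x.1 x.2 u, x.2))
    ?_ ?_ ?_ ?_ ?_
  · rintro ⟨g, α⟩ hx
    obtain ⟨hcount, hval⟩ := (Finset.mem_filter.mp hx).2
    refine Finset.mem_filter.mpr ⟨Finset.mem_univ _, ?_, update_self α v g⟩
    rw [fiberCount_update, hcount, hval]
    abel
  · rintro ⟨g, α⟩ hx
    obtain ⟨hcount, hval⟩ := (Finset.mem_filter.mp hx).2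
    refine Finset.mem_filter.mpr ⟨Finset.mem_univ _, ?_, update_self α u g⟩
    rw [fiberCount_update, hcount, hval]
  · rintro ⟨g, α⟩ hx
    simp [← (Finset.mem_filter.mp hx).2.2]
  · rintro ⟨g, α⟩ hx
    simp [← (Finset.mem_filter.mp hx).2.2]
  · rintro ⟨g, α⟩ hx
    have hval : g α = u := (Finset.mem_filter.mp hx).2.2
    refine Finset.prod_congr rfl fun β _ => ?_
    dsimp only
    rcases eq_or_ne β α with rfl | hβ
    · rw [update_self, hval, hw]
    · rw [update_of_ne hβ]

end Configurations

section Cells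

variable {d m n_s n : ℕ} {A : Fin m → Set (E d)}

def cell (A : Fin m → Set (E d)) (c : Fin n → Fin m) : Set (Fin n → E d) :=
  Set.univ.pi fun α => A (c α)

lemma iUnion_cell {Xdom : Set (E d)} (hcover : ⋃ k, A k = Xdom) :
    ⋃ c : Fin n → Fin m, cell A c = posSet Xdom n := by
  simp only [cell]
  rw [Set.iUnion_univ_pi, hcover, posSet]

lemma measurableSet_cell (hAmeas : ∀ k, MeasurableSet (A k)) (c : Fin n → Fin m) :
    MeasurableSet (cell A c) :=
  MeasurableSet.univ_pi fun α => hAmeas (c α)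

lemma volume_real_cell (c : Fin n → Fin m) :
    volume.real (cell A c) = ∏ α, volume.real (A (c α)) := by
  simp only [cell, Measure.real, volume_pi_pi, ENNReal.toReal_prod]

lemma pairwise_disjoint_cell (hA : Pairwise (Disjoint on A)) :
    Pairwise (Disjoint on cell (n := n) A) := fun c c' hcc' => by
  obtain ⟨α, hα⟩ := Function.ne_iff.mp hcc'
  exact Set.disjoint_univ_pi.mpr ⟨α, hA hα⟩

lemma occ_eq_fiberCount (hA : Pairwise (Disjoint on A)) {c : Fin n → Fin m}
    {X : Fin n → E d} (hX : X ∈ cell A c) (S : Fin n → Fin n_s) (i : Fin n_s) (k : Fin m) :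
    (occ A X S i k : ℤ) = fiberCount (fun α => (S α, c α)) (i, k) := by
  have hmem : ∀ α, X α ∈ A k ↔ c α = k := fun α =>
    ⟨fun h => by_contra fun hne => Set.disjoint_left.mp (hA hne) (hX α trivial) h,
     fun h => h ▸ hX α trivial⟩
  rw [occ, fiberCount, ← Set.ncard_coe_finset]
  congr 2
  ext α
  simp [hmem, and_comm]

lemma Phi_eq_of_mem_cell (hA : Pairwise (Disjoint on A)) {c : Fin n → Fin m}
    {X : Fin n → E d} (hX : X ∈ cell A c) (N : Fin n_s → Fin m → ℤ) (S : Fin n → Fin n_s) :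
    Phi A N X S = if fiberCount (fun α => (S α, c α)) = uncurry N then 1 else 0 := by
  simp only [Phi, occ_eq_fiberCount hA hX, funext_iff, Prod.forall, uncurry_apply_pair]

lemma Phi_mul_self_eqOn_cell (hA : Pairwise (Disjoint on A)) (c : Fin n → Fin m)
    (N : Fin n_s → Fin m → ℤ) (S : Fin n → Fin n_s) :
    Set.EqOn (fun X => Phi A N X S * Phi A N X S)
      (fun _ => if fiberCount (fun α => (S α, c α)) = uncurry N then 1 else 0) (cell A c) :=
  fun X hX => by
    simp only [Phi_eq_of_mem_cell hA hX]
    split_ifs <;> norm_num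

lemma integrableOn_cell_Phi_mul_self (hA : Pairwise (Disjoint on A))
    (hAmeas : ∀ k, MeasurableSet (A k)) (hAfin : ∀ k, volume (A k) ≠ ⊤) (c : Fin n → Fin m)
    (N : Fin n_s → Fin m → ℤ) (S : Fin n → Fin n_s) :
    IntegrableOn (fun X => Phi A N X S * Phi A N X S) (cell A c) := by
  have hfin : volume (cell A c) ≠ ⊤ := by
    simpa only [cell, volume_pi_pi] using ENNReal.prod_ne_top fun α _ => hAfin (c α)
  exact (integrableOn_const hfin).congr_fun (Phi_mul_self_eqOn_cell hA c N S).symm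
    (measurableSet_cell hAmeas c)

lemma setIntegral_cell_Phi_mul_self (hA : Pairwise (Disjoint on A))
    (hAmeas : ∀ k, MeasurableSet (A k)) (c : Fin n → Fin m) (N : Fin n_s → Fin m → ℤ)
    (S : Fin n → Fin n_s) :
    ∫ X in cell A c, Phi A N X S * Phi A N X S
      = if fiberCount (fun α => (S α, c α)) = uncurry N then ∏ α, volume.real (A (c α)) else 0 := by
  rw [setIntegral_congr_fun (measurableSet_cell hAmeas c) (Phi_mul_self_eqOn_cell hA c N S),
    setIntegral_const, volume_real_cell, smul_eq_mul, mul_ite, mul_one, mul_zero]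

lemma ip_Phi_self_eq_configWeight {Xdom : Set (E d)} (hAmeas : ∀ k, MeasurableSet (A k)) (hA : Pairwise (Disjoint on A))
    (hAfin : ∀ k, volume (A k) ≠ ⊤) (hcover : ⋃ k, A k = Xdom) (N : Fin n_s → Fin m → ℤ) :
    ip Xdom (Phi (n_a := n) A N) (Phi A N)
      = (((volume Xdom).toReal * n_s) ^ n)⁻¹
        * configWeight (Fin n) (fun p => volume.real (A p.2)) (uncurry N) := by
  rw [ip]
  congr 1
  calc ∑ S, ∫ X in posSet Xdom n, Phi A N X S * Phi A N X S
      = ∑ S : Fin n → Fin n_s, ∑ c : Fin n → Fin m,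
          if fiberCount (fun α => (S α, c α)) = uncurry N then ∏ α, volume.real (A (c α)) else 0 := by
        refine Finset.sum_congr rfl fun S _ => ?_
        rw [← iUnion_cell hcover, integral_iUnion_fintype (measurableSet_cell hAmeas)
          (pairwise_disjoint_cell hA) (integrableOn_cell_Phi_mul_self hA hAmeas hAfin · N S)]
        simp only [setIntegral_cell_Phi_mul_self hA hAmeas]
    _ = configWeight (Fin n) (fun p => volume.real (A p.2)) (uncurry N) := by
        rw [configWeight, ← Fintype.sum_prod_type',
          ← (Equiv.arrowProdEquivProdArrow _ _ _).sum_comp]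
        rfl

end Cells

lemma uncurry_Emat {n_s m : ℕ} (i : Fin n_s) (k : Fin m) :
    uncurry (Emat i k) = Pi.single (i, k) 1 := by
  ext ⟨i', k'⟩
  simp [Emat, Pi.single_apply, Prod.ext_iff]

lemma uncurry_nonneg_of_mem_Mset {n_s m n : ℕ} {N : Fin n_s → Fin m → ℤ}
    (hN : N ∈ Mset n_s m n) : 0 ≤ uncurry N := by
  obtain ⟨f, -, rfl⟩ := Finset.mem_image.mp (Finset.mem_filter.mp hN).1
  exact fun p => Int.natCast_nonneg _

lemma sum_uncurry_of_mem_Mset {n_s m n : ℕ} {N : Fin n_s → Fin m → ℤ}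
    (hN : N ∈ Mset n_s m n) : ∑ p, uncurry N p = Fintype.card (Fin n) := by
  rw [Fintype.sum_prod_type, Fintype.card_fin]
  exact (Finset.mem_filter.mp hN).2

theorem statement4_general (d m n_s n_a : ℕ) (hns : 1 ≤ n_s)
    (Xdom : Set (E d)) (hXcomp : IsCompact Xdom) (hXpos : 0 < volume Xdom)
    (A : Fin m → Set (E d)) (hAmeas : ∀ k, MeasurableSet (A k))
    (hAdisj : Pairwise (Disjoint on A)) (hApos : ∀ k, 0 < volume (A k))
    (hAcover : (⋃ k, A k) = Xdom)
    (N : Fin n_s → Fin m → ℤ) (hN : N ∈ Mset n_s m n_a)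
    (i j : Fin n_s) (hij : i ≠ j) (k : Fin m)
    (M : Fin n_s → Fin m → ℤ) (hM : M = N + Emat j k - Emat i k) :
    ip Xdom (Phi (n_a := n_a) A M) (Phi A M) / ip Xdom (Phi (n_a := n_a) A N) (Phi A N)
      = (N i k : ℝ) / ((N j k : ℝ) + 1) := by
  have hXfin : volume Xdom ≠ ⊤ := hXcomp.measure_lt_top.ne
  have hAfin (k : Fin m) : volume (A k) ≠ ⊤ :=
    ne_top_of_le_ne_top hXfin (measure_mono (hAcover ▸ Set.subset_iUnion A k : A k ⊆ Xdom))
  have hMN : uncurry M = uncurry N + Pi.single (j, k) 1 - Pi.single (i, k) 1 := by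
    rw [← uncurry_Emat, ← uncurry_Emat, hM]
    rfl
  have hnorm : (((volume Xdom).toReal * n_s) ^ n_a)⁻¹ ≠ 0 := by
    have : (0 : ℝ) < n_s := by exact_mod_cast hns
    have := ENNReal.toReal_pos hXpos.ne' hXfin
    positivity
  have hweight : 0 < configWeight (Fin n_a) (fun p => volume.real (A p.2)) (uncurry N) := by
    refine configWeight_pos (fun p => ?_) (uncurry_nonneg_of_mem_Mset hN)
      (sum_uncurry_of_mem_Mset hN)
    exact ENNReal.toReal_pos (hApos p.2).ne' (hAfin p.2)
  have hNjk : (0 : ℝ) < N j k + 1 := by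
    have : (0 : ℝ) ≤ N j k := by exact_mod_cast uncurry_nonneg_of_mem_Mset hN (j, k)
    linarith
  rw [ip_Phi_self_eq_configWeight hAmeas hAdisj hAfin hAcover, ip_Phi_self_eq_configWeight hAmeas hAdisj hAfin hAcover, hMN,
    mul_div_mul_left _ _ hnorm, div_eq_div_iff hweight.ne' hNjk.ne']
  have hjk : ((j, k) : Fin n_s × Fin m) ≠ (i, k) := by simp [hij.symm]
  exact (configWeight_shift_mul (ι := Fin n_a) (w := fun p => volume.real (A p.2)) hjk rfl
    (uncurry N)).trans (mul_comm _ _)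

/-- for `N ∈ M_{n_a}`, statuses `i ≠ j` and a subset index `k` with
`N_i^{(k)} > 0`, the matrix `M = N + E_j^{(k)} − E_i^{(k)}` satisfies
`⟨Φ_M, Φ_M⟩ / ⟨Φ_N, Φ_N⟩ = N_i^{(k)} / (N_j^{(k)} + 1)`. -/
theorem statement4 (d m n_s n_a : ℕ) (hns : 1 ≤ n_s) (hna : 1 ≤ n_a)
    (Xdom : Set (E d)) (hXcomp : IsCompact Xdom) (hXpos : 0 < volume Xdom)
    (A : Fin m → Set (E d)) (hAmeas : ∀ k, MeasurableSet (A k))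
    (hAdisj : Pairwise (Disjoint on A)) (hApos : ∀ k, 0 < volume (A k))
    (hAcover : (⋃ k, A k) = Xdom)
    (N : Fin n_s → Fin m → ℤ) (hN : N ∈ Mset n_s m n_a)
    (i j : Fin n_s) (hij : i ≠ j) (k : Fin m) (hNik : 0 < N i k)
    (M : Fin n_s → Fin m → ℤ) (hM : M = N + Emat j k - Emat i k) :
    ip Xdom (Phi (n_a := n_a) A M) (Phi A M) / ip Xdom (Phi (n_a := n_a) A N) (Phi A N)
      = (N i k : ℝ) / ((N j k : ℝ) + 1) :=
  statement4_general d m n_s n_a hns Xdom hXcomp hXpos A hAmeas hAdisj hApos hAcover N hN i j hij k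
    M hM

end ABMFormal
end

section
/- Assume mass conservation: ∫_X ℓ_i(x, y) dx = 0 for every status i and almost every y ∈ X. Then for all M, N ∈ M_{n_a} the matrix representation L̂ of the Galerkin projection QLQ, with entries L̂_{NM} = ⟨Φ_M, L Φ_N⟩ / ⟨Φ_N, 𝟙⟩, is given by: L̂_{NM} = λ_i^{(kl)} N_i^{(k)} if M = N + E_i^{(l)} − E_i^{(k)} for some status i and subset indices k ≠ l; L̂_{NN} = −∑_{i=1}^{n_s} ∑_{k,l=1, l≠k}^m λ_i^{(kl)} N_i^{(k)}; and L̂_{NM} = 0 in all other cases. -/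
/-!
Cut `X^{n_a}` into the boxes `A_{c 1} × ⋯ × A_{c n_a}`, one for each assignment `c` of agents to
subsets. On a box `Φ_N(·, S)` is constant, equal to `1` exactly when the occupation matrix of
`(S, c)` is `N`, and the movement generator moves a single agent `α` into some `A_k`, i.e. it
replaces `c` by `update c α k`. Fubini therefore turns `⟨Φ_M, L Φ_N⟩` into a finite sum over
`(S, c, α, k)` of cell volumes times the double integrals `∫_{A_{c α}} ∫_{A_k} ℓ`. Exchanging the
roles of `c` and `update c α k` rewrites it as a sum over the `N`-configurations `c`, each weighted
by its box volume exactly as in `⟨Φ_N, 𝟙⟩`, of the rates of all single-agent moves `k → l`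
(including `l = k`) leading from `N` to `M`. Grouping the agents by status and cell shows that this
weight is the same for every such `c`, so `L̂_{NM}` is that sum of rates, `movementEntry λ N M`.
The three cases are its evaluations; on the diagonal, mass conservation gives `∑_l λ_i^{(kl)} = 0`,
which turns the stay rate `λ_i^{(kk)}` into `-∑_{l ≠ k} λ_i^{(kl)}`.
-/

open MeasureTheory Finset Function

namespace ABMFormal

section Occupation

variable {ι : Type*} [Fintype ι] {n_s m : ℕ}

def occMat (S : ι → Fin n_s) (c : ι → Fin m) : Fin n_s → Fin m → ℤ :=
  ∑ α, Emat (S α) (c α)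

lemma occMat_apply (S : ι → Fin n_s) (c : ι → Fin m) (i : Fin n_s) (k : Fin m) :
    occMat S c i k = #{α | c α = k ∧ S α = i} := by
  simp only [occMat, Finset.sum_apply, Emat, sum_boole, Nat.cast_inj]
  congr 1
  ext α
  simp [and_comm, eq_comm]

lemma occMat_update [DecidableEq ι] (S : ι → Fin n_s) (c : ι → Fin m) (α : ι) (k : Fin m) :
    occMat S (update c α k) = occMat S c + Emat (S α) k - Emat (S α) (c α) := by
  simp only [occMat]
  rw [← add_sum_erase _ _ (mem_univ α), ← add_sum_erase _ _ (mem_univ α),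
    sum_congr rfl fun β hβ => by rw [update_of_ne (ne_of_mem_erase hβ)]]
  simp only [update_self]
  abel

lemma sum_comp_eq_sum_occMat {R : Type*} [Ring R] (S : ι → Fin n_s) (c : ι → Fin m)
    (F : Fin n_s → Fin m → R) :
    ∑ α, F (S α) (c α) = ∑ i, ∑ k, (occMat S c i k : R) * F i k := by
  rw [← sum_fiberwise' univ (fun α => (S α, c α)) fun p => F p.1 p.2,
    Fintype.sum_prod_type]
  refine sum_congr rfl fun i _ => sum_congr rfl fun k _ => ?_
  rw [sum_const, occMat_apply, nsmul_eq_mul, Int.cast_natCast]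
  congr 3
  ext α
  simp [Prod.ext_iff, and_comm]

lemma exists_card_fiber_eq {T : Type*} [Fintype T] [DecidableEq T] (g : T → ℕ) {n : ℕ}
    (hn : ∑ t, g t = n) : ∃ φ : Fin n → T, ∀ t, #{α | φ α = t} = g t := by
  subst hn
  let e : Fin (∑ t, g t) ≃ Σ t, Fin (g t) := (Fintype.equivFinOfCardEq (by simp)).symm
  refine ⟨fun α => (e α).1, fun t => ?_⟩
  rw [card_equiv e (t := univ.filter fun σ => σ.1 = t) (by simp), card_filter, Fintype.sum_sigma,
    Fintype.sum_eq_single t fun t' h => by simp [h]]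
  simp

lemma exists_occMat_eq_of_mem_Mset {n_s m n_a : ℕ} {N : Fin n_s → Fin m → ℤ}
    (hN : N ∈ Mset n_s m n_a) :
    ∃ (S : Fin n_a → Fin n_s) (c : Fin n_a → Fin m), occMat S c = N := by
  simp only [Mset, mem_filter, mem_image, mem_univ, true_and] at hN
  obtain ⟨⟨f, rfl⟩, hsum⟩ := hN
  obtain ⟨φ, hφ⟩ := exists_card_fiber_eq (fun p : Fin n_s × Fin m => (f p.1 p.2 : ℕ)) (n := n_a)
    (by beta_reduce at hsum; rw [Fintype.sum_prod_type]; exact_mod_cast hsum)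
  refine ⟨fun α => (φ α).1, fun α => (φ α).2, funext₂ fun i k => ?_⟩
  rw [occMat_apply, ← hφ (i, k)]
  simp [Prod.ext_iff, and_comm]

end Occupation

section Movement

variable {n_s m : ℕ}

lemma Emat_sub_Emat_eq_iff {i i' : Fin n_s} {k l k' l' : Fin m} (hkl : k ≠ l) :
    Emat i' l' - Emat i' k' = Emat i l - Emat i k ↔ i' = i ∧ k' = k ∧ l' = l := by
  constructor
  · intro h
    have hl := congr_fun₂ h i l
    have hk := congr_fun₂ h i k
    simp only [Pi.sub_apply, Emat, hkl, hkl.symm, and_self, and_false, if_true, if_false] at hl hk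
    split_ifs at hl hk <;> omega
  · rintro ⟨rfl, rfl, rfl⟩
    rfl

lemma Emat_left_injective (i : Fin n_s) : Injective (Emat (m := m) i) := fun l k h => by
  simpa [Emat] using congr_fun₂ h i l

def movementEntry (r : Fin n_s → Fin m → Fin m → ℝ) (N M : Fin n_s → Fin m → ℤ) : ℝ :=
  ∑ i, ∑ k, ∑ l, if N + Emat i l - Emat i k = M then r i k l * N i k else 0

variable (r : Fin n_s → Fin m → Fin m → ℝ) (N : Fin n_s → Fin m → ℤ)

lemma movementEntry_of_ne {i : Fin n_s} {k l : Fin m} (hkl : k ≠ l) :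
    movementEntry r N (N + Emat i l - Emat i k) = r i k l * N i k := by
  simp only [movementEntry, add_sub_assoc, add_right_inj, Emat_sub_Emat_eq_iff hkl, ite_and]
  simp

lemma movementEntry_self : movementEntry r N N = ∑ i, ∑ k, r i k k * N i k := by
  simp only [movementEntry, add_sub_assoc, add_eq_left, sub_eq_zero,
    (Emat_left_injective _).eq_iff]
  simp

lemma movementEntry_eq_zero {M : Fin n_s → Fin m → ℤ} (hMN : M ≠ N)
    (hmove : ¬∃ i k l, k ≠ l ∧ M = N + Emat i l - Emat i k) :
    movementEntry r N M = 0 := by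
  refine sum_eq_zero fun i _ => sum_eq_zero fun k _ => sum_eq_zero fun l _ => if_neg ?_
  rintro rfl
  rcases eq_or_ne k l with rfl | hkl
  · exact hMN (by simp)
  · exact hmove ⟨i, k, l, hkl, rfl⟩

lemma movementEntry_self_of_sum_eq_zero (hr : ∀ i k, ∑ l, r i k l = 0) :
    movementEntry r N N = -∑ i, ∑ k, ∑ l ∈ univ.erase k, r i k l * N i k := by
  have hdiag : ∀ i k, r i k k = -∑ l ∈ univ.erase k, r i k l := fun i k =>
    eq_neg_of_add_eq_zero_left ((add_sum_erase _ _ (mem_univ k)).trans (hr i k))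
  simp only [movementEntry_self, hdiag, neg_mul, sum_mul, sum_neg_distrib]

end Movement

section Reindex

variable {ι κ R : Type*} [Fintype ι] [DecidableEq ι]

lemma sum_sum_update_comm [Fintype κ] [AddCommMonoid R] (α : ι) (G : (ι → κ) → (ι → κ) → R) :
    ∑ c, ∑ k, G c (update c α k) = ∑ c, ∑ k, G (update c α k) c := by
  let swap : Equiv.Perm ((ι → κ) × κ) :=
    Involutive.toPerm (fun p => (update p.1 α p.2, p.1 α)) fun p => by simp
  rw [← Fintype.sum_prod_type', ← Fintype.sum_prod_type']
  exact Fintype.sum_equiv swap _ _ fun p => by simp [swap, Involutive.toPerm]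

lemma prod_update_eq_mul_prod_erase [CommMonoid R] (w : κ → R) (c : ι → κ) (α : ι) (k : κ) :
    ∏ β, w (update c α k β) = w k * ∏ β ∈ univ.erase α, w (c β) := by
  rw [← mul_prod_erase univ _ (mem_univ α), update_self]
  exact congrArg _ (prod_congr rfl fun β hβ => by rw [update_of_ne (ne_of_mem_erase hβ)])

end Reindex

section BoxSum

variable {ι : Type*} [Fintype ι] [DecidableEq ι] {n_s m : ℕ}
  (r : Fin n_s → Fin m → Fin m → ℝ) (S : ι → Fin n_s) (N M : Fin n_s → Fin m → ℤ)

lemma sum_update_occMat_eq_movementEntry {c : ι → Fin m} (hc : occMat S c = N) :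
    ∑ α, ∑ k, (if occMat S (update c α k) = M then r (S α) (c α) k else 0) =
      movementEntry r N M := by
  simp only [occMat_update, hc]
  rw [sum_comp_eq_sum_occMat S c fun i a =>
    ∑ k, if N + Emat i k - Emat i a = M then r i a k else 0]
  simp only [hc, movementEntry, mul_sum, mul_ite, mul_zero, mul_comm]

lemma sum_boxes_eq_movementEntry_mul (w : Fin m → ℝ) :
    ∑ c : ι → Fin m, (if occMat S c = M then 1 else 0) *
        ∑ α, ∑ k, (if occMat S (update c α k) = N then 1 else 0) *
          ((∏ β ∈ univ.erase α, w (c β)) * (r (S α) k (c α) * w k)) =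
      movementEntry r N M *
        ∑ c : ι → Fin m, (if occMat S c = N then 1 else 0) * ∏ β, w (c β) := by
  let G : ι → (ι → Fin m) → (ι → Fin m) → ℝ := fun α c c' =>
    (if occMat S c = M then 1 else 0) * (if occMat S c' = N then 1 else 0) *
      ((∏ β, w (c' β)) * r (S α) (c' α) (c α))
  calc _ = ∑ α, ∑ c, ∑ k, G α c (update c α k) := by
        simp only [mul_sum, G, prod_update_eq_mul_prod_erase, update_self]
        rw [sum_comm]
        refine sum_congr rfl fun α _ => sum_congr rfl fun c _ => sum_congr rfl fun k _ => ?_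
        ring
    _ = ∑ α, ∑ c, ∑ k, G α (update c α k) c :=
        sum_congr rfl fun α _ => sum_sum_update_comm α (G α)
    _ = ∑ c, (if occMat S c = N then 1 else 0) * (∏ β, w (c β)) *
          ∑ α, ∑ k, (if occMat S (update c α k) = M then r (S α) (c α) k else 0) := by
        simp only [mul_sum, G, update_self]
        rw [sum_comm]
        refine sum_congr rfl fun c _ => sum_congr rfl fun α _ => sum_congr rfl fun k _ => ?_
        split_ifs <;> ring
    _ = _ := by
        rw [mul_sum]
        refine sum_congr rfl fun c _ => ?_
        split_ifs with hc
        · rw [sum_update_occMat_eq_movementEntry r S N M hc]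
          ring
        · simp

end BoxSum

section ProductIntegrals

variable {ι : Type*} [Fintype ι]

lemma integral_comp_eval_of_isFiniteMeasure [DecidableEq ι] {X : ι → Type*}
    [∀ i, MeasurableSpace (X i)] {μ : ∀ i, Measure (X i)} [∀ i, IsFiniteMeasure (μ i)] {i : ι}
    {f : X i → ℝ} (hf : AEStronglyMeasurable f (μ i)) :
    ∫ x, f (x i) ∂Measure.pi μ = (∏ j ∈ univ.erase i, (μ j).real Set.univ) * ∫ x, f x ∂μ i := by
  have hmap := Measure.pi_map_eval μ i
  rw [← integral_map (measurable_pi_apply i).aemeasurable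
    (by rw [hmap]; exact hf.smul_measure _), hmap, integral_smul_measure, ENNReal.toReal_prod,
    smul_eq_mul]
  rfl

variable {Y : Type*} [MeasureSpace Y] [SigmaFinite (volume : Measure Y)] {B : ι → Set Y}

lemma volume_restrict_univ_pi (B : ι → Set Y) :
    (volume : Measure (ι → Y)).restrict (Set.univ.pi B) =
      Measure.pi fun β => volume.restrict (B β) := by
  rw [volume_pi, Measure.restrict_pi_pi]

lemma integrableOn_univ_pi_comp_eval (hB : ∀ β, volume (B β) ≠ ⊤) {α : ι} {f : Y → ℝ}
    (hf : IntegrableOn f (B α)) : IntegrableOn (fun X : ι → Y => f (X α)) (Set.univ.pi B) := by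
  have : ∀ β, IsFiniteMeasure (volume.restrict (B β)) := fun β => isFiniteMeasure_restrict.2 (hB β)
  rw [IntegrableOn, volume_restrict_univ_pi]
  exact integrable_comp_eval hf

lemma setIntegral_univ_pi_comp_eval [DecidableEq ι] (hB : ∀ β, volume (B β) ≠ ⊤) {α : ι}
    {f : Y → ℝ} (hf : AEStronglyMeasurable f (volume.restrict (B α))) :
    ∫ X in Set.univ.pi B, f (X α) = (∏ β ∈ univ.erase α, volume.real (B β)) * ∫ x in B α, f x := by
  have : ∀ β, IsFiniteMeasure (volume.restrict (B β)) := fun β => isFiniteMeasure_restrict.2 (hB β)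
  rw [volume_restrict_univ_pi, integral_comp_eval_of_isFiniteMeasure hf]
  simp only [measureReal_restrict_apply_univ]

end ProductIntegrals

section Kernels

variable {Y : Type*} [MeasureSpace Y] [SigmaFinite (volume : Measure Y)] {s t : Set Y}
  {K : Y → Y → ℝ}

lemma integrable_restrict_prod_of_integrableOn
    (hK : IntegrableOn (fun q : Y × Y => K q.1 q.2) (s ×ˢ t)) :
    Integrable (uncurry K) ((volume.restrict s).prod (volume.restrict t)) := by
  rwa [IntegrableOn, Measure.volume_eq_prod, ← Measure.prod_restrict] at hK

lemma integrableOn_setIntegral_of_integrableOn_prod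
    (hK : IntegrableOn (fun q : Y × Y => K q.1 q.2) (s ×ˢ t)) :
    IntegrableOn (fun x => ∫ y in t, K x y) s :=
  (integrable_restrict_prod_of_integrableOn hK).integral_prod_left

lemma ae_integrableOn_of_integrableOn_prod
    (hK : IntegrableOn (fun q : Y × Y => K q.1 q.2) (s ×ˢ t)) :
    ∀ᵐ x ∂volume.restrict s, IntegrableOn (K x) t :=
  (integrable_restrict_prod_of_integrableOn hK).prod_right_ae

end Kernels

section CellBoxes

variable {ι Y κ : Type*} (A : κ → Set Y)

def cellBox (c : ι → κ) : Set (ι → Y) := Set.univ.pi fun β => A (c β)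

variable {A}

lemma iUnion_cellBox : ⋃ c : ι → κ, cellBox A c = Set.univ.pi fun _ => ⋃ k, A k :=
  Set.iUnion_univ_pi fun _ => A

lemma pairwise_disjoint_cellBox (hA : Pairwise (Disjoint on A)) :
    Pairwise (Disjoint on (cellBox A : (ι → κ) → Set (ι → Y))) := fun c c' hcc' => by
  obtain ⟨β, hβ⟩ := ne_iff.1 hcc'
  exact Set.disjoint_univ_pi.2 ⟨β, hA hβ⟩

lemma update_mem_cellBox [DecidableEq ι] {c : ι → κ} {X : ι → Y} (hX : X ∈ cellBox A c) (α : ι)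
    {k : κ} {y : Y} (hy : y ∈ A k) : update X α y ∈ cellBox A (update c α k) := fun β _ => by
  rcases eq_or_ne β α with rfl | hβ
  · simpa using hy
  · simpa [hβ] using hX β trivial

lemma mem_iff_eq_of_mem_cellBox (hA : Pairwise (Disjoint on A)) {c : ι → κ} {X : ι → Y}
    (hX : X ∈ cellBox A c) (β : ι) (k : κ) : X β ∈ A k ↔ c β = k :=
  ⟨fun h => by_contra fun hne => Set.disjoint_left.1 (hA hne) (hX β trivial) h,
    fun h => h ▸ hX β trivial⟩

end CellBoxes

section Ansatz

variable {d m n_s n_a : ℕ} {A : Fin m → Set (E d)}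

lemma Phi_of_mem_cellBox (hA : Pairwise (Disjoint on A)) {c : Fin n_a → Fin m}
    {X : Fin n_a → E d} (hX : X ∈ cellBox A c) (N : Fin n_s → Fin m → ℤ) (S : Fin n_a → Fin n_s) :
    Phi A N X S = if occMat S c = N then 1 else 0 := by
  have hocc : ∀ i k, (occ A X S i k : ℤ) = occMat S c i k := fun i k => by
    simp only [occ, occMat_apply, mem_iff_eq_of_mem_cellBox hA hX, ← Set.ncard_coe_finset,
      coe_filter, mem_univ, true_and]
  simp only [Phi, hocc, funext_iff]

variable {K : Fin n_s → E d → E d → ℝ}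

lemma Lop_Phi_of_mem_cellBox (hAmeas : ∀ k, MeasurableSet (A k)) (hA : Pairwise (Disjoint on A))
    {c : Fin n_a → Fin m} {X : Fin n_a → E d} (hX : X ∈ cellBox A c) (N : Fin n_s → Fin m → ℤ)
    (S : Fin n_a → Fin n_s) (hK : ∀ α, IntegrableOn (K (S α) (X α)) (⋃ k, A k)) :
    Lop (⋃ k, A k) K (Phi A N) X S =
      ∑ α, ∑ k, (if occMat S (update c α k) = N then 1 else 0) * ∫ y in A k, K (S α) (X α) y := by
  refine sum_congr rfl fun α _ => ?_
  have hcell : ∀ k, Set.EqOn (fun y => K (S α) (X α) y * Phi A N (update X α y) S)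
      (fun y => (if occMat S (update c α k) = N then 1 else 0) * K (S α) (X α) y) (A k) :=
    fun k y hy => by
      dsimp only
      rw [Phi_of_mem_cellBox hA (update_mem_cellBox hX α hy), mul_comm]
  rw [integral_iUnion_fintype hAmeas hA fun k => IntegrableOn.congr_fun
    (((hK α).mono_set (Set.subset_iUnion A k)).const_mul _) (hcell k).symm (hAmeas k)]
  exact sum_congr rfl fun k _ => by
    rw [setIntegral_congr_fun (hAmeas k) (hcell k), integral_const_mul]

lemma ae_restrict_cellBox_integrableOn {c : Fin n_a → Fin m} {S : Fin n_a → Fin n_s}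
    (hK : ∀ i, IntegrableOn (fun q : E d × E d => K i q.1 q.2) ((⋃ k, A k) ×ˢ (⋃ k, A k))) :
    ∀ᵐ X ∂volume.restrict (cellBox A c), ∀ α, IntegrableOn (K (S α) (X α)) (⋃ k, A k) := by
  rw [cellBox, volume_restrict_univ_pi]
  refine ae_all_iff.2 fun α => ?_
  have h := ae_restrict_of_ae_restrict_of_subset (Set.subset_iUnion A (c α))
      (ae_integrableOn_of_integrableOn_prod (hK (S α)))
  exact (Measure.quasiMeasurePreserving_eval (fun β => volume.restrict (A (c β))) α).ae h

lemma setIntegral_cellBox_Phi_mul_Lop_Phi (hAmeas : ∀ k, MeasurableSet (A k))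
    (hA : Pairwise (Disjoint on A)) (hAfin : ∀ k, volume (A k) ≠ ⊤)
    (hK : ∀ i, IntegrableOn (fun q : E d × E d => K i q.1 q.2) ((⋃ k, A k) ×ˢ (⋃ k, A k)))
    (M N : Fin n_s → Fin m → ℤ) (S : Fin n_a → Fin n_s) (c : Fin n_a → Fin m) :
    IntegrableOn (fun X => Phi A M X S * Lop (⋃ k, A k) K (Phi A N) X S) (cellBox A c) ∧
      ∫ X in cellBox A c, Phi A M X S * Lop (⋃ k, A k) K (Phi A N) X S =
        (if occMat S c = M then 1 else 0) * ∑ α, ∑ k,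
          (if occMat S (update c α k) = N then 1 else 0) *
            ((∏ β ∈ univ.erase α, volume.real (A (c β))) *
              ∫ x in A (c α), ∫ y in A k, K (S α) x y) := by
  have hj : ∀ α k, IntegrableOn (fun x => ∫ y in A k, K (S α) x y) (A (c α)) := fun α k =>
    integrableOn_setIntegral_of_integrableOn_prod
      ((hK (S α)).mono_set (Set.prod_mono (Set.subset_iUnion A _) (Set.subset_iUnion A k)))
  have hjX : ∀ α k, IntegrableOn (fun X : Fin n_a → E d => ∫ y in A k, K (S α) (X α) y)
      (cellBox A c) := fun α k => integrableOn_univ_pi_comp_eval (fun β => hAfin _) (hj α k)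
  have hae : (fun X => Phi A M X S * Lop (⋃ k, A k) K (Phi A N) X S)
      =ᵐ[volume.restrict (cellBox A c)] fun X => (if occMat S c = M then 1 else 0) * ∑ α, ∑ k,
        (if occMat S (update c α k) = N then 1 else 0) * ∫ y in A k, K (S α) (X α) y := by
    filter_upwards [ae_restrict_mem (MeasurableSet.univ_pi fun β => hAmeas (c β)),
      ae_restrict_cellBox_integrableOn hK] with X hX hXK
    rw [Phi_of_mem_cellBox hA hX, Lop_Phi_of_mem_cellBox hAmeas hA hX N S hXK]
  refine ⟨Integrable.congr ?_ hae.symm, ?_⟩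
  · exact (integrable_finsetSum _ fun α _ => integrable_finsetSum _ fun k _ =>
      (hjX α k).const_mul _).const_mul _
  · rw [integral_congr_ae hae, integral_const_mul, integral_finsetSum _ fun α _ =>
      integrable_finsetSum _ fun k _ => (hjX α k).const_mul _]
    refine congrArg _ (sum_congr rfl fun α _ => ?_)
    rw [integral_finsetSum _ fun k _ => (hjX α k).const_mul _]
    refine sum_congr rfl fun k _ => ?_
    rw [integral_const_mul, cellBox,
      setIntegral_univ_pi_comp_eval (fun β => hAfin _) (hj α k).aestronglyMeasurable]

lemma setIntegral_cellBox_Phi (hAmeas : ∀ k, MeasurableSet (A k))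
    (hA : Pairwise (Disjoint on A)) (hAfin : ∀ k, volume (A k) ≠ ⊤)
    (N : Fin n_s → Fin m → ℤ) (S : Fin n_a → Fin n_s) (c : Fin n_a → Fin m) :
    IntegrableOn (fun X => Phi A N X S * one d n_s n_a X S) (cellBox A c) ∧
      ∫ X in cellBox A c, Phi A N X S * one d n_s n_a X S =
        (if occMat S c = N then 1 else 0) * ∏ β, volume.real (A (c β)) := by
  have hmeas : MeasurableSet (cellBox A c) := MeasurableSet.univ_pi fun β => hAmeas (c β)
  have hconst : Set.EqOn (fun X => Phi A N X S * one d n_s n_a X S)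
      (fun _ => if occMat S c = N then 1 else 0) (cellBox A c) := fun X hX => by
    dsimp only
    rw [Phi_of_mem_cellBox hA hX, one, mul_one]
  have hvol : volume (cellBox A c) = ∏ β, volume (A (c β)) := volume_pi_pi _
  refine ⟨IntegrableOn.congr_fun (integrableOn_const ?_) hconst.symm hmeas, ?_⟩
  · rw [hvol]
    exact ENNReal.prod_ne_top fun β _ => hAfin _
  · rw [setIntegral_congr_fun hmeas hconst, setIntegral_const, smul_eq_mul, mul_comm,
      measureReal_def, hvol, ENNReal.toReal_prod]
    rfl

lemma setIntegral_posSet_eq_sum_cellBox (hAmeas : ∀ k, MeasurableSet (A k))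
    (hA : Pairwise (Disjoint on A)) {F : (Fin n_a → E d) → ℝ}
    (hF : ∀ c, IntegrableOn F (cellBox A c)) :
    ∫ X in posSet (⋃ k, A k) n_a, F X = ∑ c, ∫ X in cellBox A c, F X := by
  rw [posSet, ← iUnion_cellBox, integral_iUnion_fintype (s := cellBox A)
    (fun c => MeasurableSet.univ_pi fun β => hAmeas (c β)) (pairwise_disjoint_cellBox hA) hF]

lemma ip_Phi_one (hAmeas : ∀ k, MeasurableSet (A k)) (hA : Pairwise (Disjoint on A))
    (hAfin : ∀ k, volume (A k) ≠ ⊤) (N : Fin n_s → Fin m → ℤ) :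
    ip (⋃ k, A k) (Phi (n_a := n_a) A N) (one d n_s n_a) =
      ((volume.real (⋃ k, A k) * n_s) ^ n_a)⁻¹ *
        ∑ S : Fin n_a → Fin n_s, ∑ c : Fin n_a → Fin m,
          (if occMat S c = N then 1 else 0) * ∏ β, volume.real (A (c β)) := by
  refine congrArg _ (sum_congr rfl fun S _ => ?_)
  rw [setIntegral_posSet_eq_sum_cellBox hAmeas hA fun c =>
    (setIntegral_cellBox_Phi hAmeas hA hAfin N S c).1]
  exact sum_congr rfl fun c _ => (setIntegral_cellBox_Phi hAmeas hA hAfin N S c).2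

lemma ip_Phi_one_pos (hns : 1 ≤ n_s) (hAmeas : ∀ k, MeasurableSet (A k))
    (hA : Pairwise (Disjoint on A)) (hAfin : ∀ k, volume (A k) ≠ ⊤) (hApos : ∀ k, 0 < volume (A k))
    (hXpos : 0 < volume (⋃ k, A k)) (hXfin : volume (⋃ k, A k) ≠ ⊤) {N : Fin n_s → Fin m → ℤ}
    (hN : N ∈ Mset n_s m n_a) :
    0 < ip (⋃ k, A k) (Phi (n_a := n_a) A N) (one d n_s n_a) := by
  rw [ip_Phi_one hAmeas hA hAfin]
  obtain ⟨S, c, hc⟩ := exists_occMat_eq_of_mem_Mset hN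
  have hw : ∀ k, 0 < volume.real (A k) := fun k => ENNReal.toReal_pos (hApos k).ne' (hAfin k)
  have hterm : ∀ (S : Fin n_a → Fin n_s) (c : Fin n_a → Fin m),
      0 ≤ (if occMat S c = N then (1 : ℝ) else 0) * ∏ β, volume.real (A (c β)) := fun S c =>
    mul_nonneg (by split_ifs <;> norm_num) (prod_nonneg fun β _ => (hw _).le)
  refine mul_pos (inv_pos.2 (pow_pos (mul_pos (ENNReal.toReal_pos hXpos.ne' hXfin)
    (by exact_mod_cast hns)) _)) (sum_pos' (fun S _ => sum_nonneg fun c _ => hterm S c)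
      ⟨S, mem_univ _, sum_pos' (fun c _ => hterm S c) ⟨c, mem_univ _, ?_⟩⟩)
  rw [if_pos hc, one_mul]
  exact prod_pos fun β _ => hw _

lemma ip_Phi_Lop_Phi (hAmeas : ∀ k, MeasurableSet (A k)) (hA : Pairwise (Disjoint on A))
    (hAfin : ∀ k, volume (A k) ≠ ⊤) (hApos : ∀ k, 0 < volume (A k))
    (hK : ∀ i, IntegrableOn (fun q : E d × E d => K i q.1 q.2) ((⋃ k, A k) ×ˢ (⋃ k, A k)))
    (N M : Fin n_s → Fin m → ℤ) :
    ip (⋃ k, A k) (Phi (n_a := n_a) A M) (Lop (⋃ k, A k) K (Phi A N)) =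
      movementEntry (lam A K) N M * ip (⋃ k, A k) (Phi (n_a := n_a) A N) (one d n_s n_a) := by
  have hJ : ∀ i a b, ∫ x in A a, ∫ y in A b, K i x y = lam A K i b a * volume.real (A b) :=
    fun i a b => by
      rw [lam, measureReal_def, div_mul_cancel₀]
      exact (ENNReal.toReal_pos (hApos b).ne' (hAfin b)).ne'
  rw [ip_Phi_one hAmeas hA hAfin, ip, mul_left_comm (movementEntry _ N M)]
  congr 1
  rw [mul_sum]
  refine sum_congr rfl fun S _ => ?_
  rw [setIntegral_posSet_eq_sum_cellBox hAmeas hA fun c =>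
    (setIntegral_cellBox_Phi_mul_Lop_Phi hAmeas hA hAfin hK M N S c).1]
  simp only [fun c => (setIntegral_cellBox_Phi_mul_Lop_Phi hAmeas hA hAfin hK M N S c).2, hJ]
  exact sum_boxes_eq_movementEntry_mul (lam A K) S N M fun k => volume.real (A k)

lemma sum_lam_eq_zero (hAmeas : ∀ k, MeasurableSet (A k)) (hA : Pairwise (Disjoint on A))
    {i : Fin n_s}
    (hK : IntegrableOn (fun q : E d × E d => K i q.1 q.2) ((⋃ k, A k) ×ˢ (⋃ k, A k)))
    (hmass : ∀ᵐ y ∂volume.restrict (⋃ k, A k), ∫ x in ⋃ k, A k, K i x y = 0) (k : Fin m) :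
    ∑ l, lam A K i k l = 0 := by
  have hKk := hK.mono_set (Set.prod_mono subset_rfl (Set.subset_iUnion A k))
  simp only [lam, ← sum_div]
  rw [← integral_iUnion_fintype hAmeas hA fun l =>
      (integrableOn_setIntegral_of_integrableOn_prod hKk).mono_set (Set.subset_iUnion A l),
    integral_integral_swap (integrable_restrict_prod_of_integrableOn hKk),
    integral_eq_zero_of_ae (ae_restrict_of_ae_restrict_of_subset (Set.subset_iUnion A k) hmass),
    zero_div]

end Ansatz

theorem statement6_general (d m n_s n_a : ℕ) (hns : 1 ≤ n_s)
    (Xdom : Set (E d)) (hXcomp : IsCompact Xdom) (hXpos : 0 < volume Xdom)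
    (A : Fin m → Set (E d)) (hAmeas : ∀ k, MeasurableSet (A k))
    (hAdisj : Pairwise (Disjoint on A)) (hApos : ∀ k, 0 < volume (A k))
    (hAcover : (⋃ k, A k) = Xdom)
    (K : Fin n_s → E d → E d → ℝ)
    (hKint : ∀ i, IntegrableOn (fun q : E d × E d => K i q.1 q.2) (Xdom ×ˢ Xdom))
    (hmass : ∀ i, ∀ᵐ y ∂(volume.restrict Xdom), ∫ x in Xdom, K i x y = 0)
    (N M : Fin n_s → Fin m → ℤ)
    (hN : N ∈ Mset n_s m n_a) :
    (∀ (i : Fin n_s) (k l : Fin m), k ≠ l → M = N + Emat i l - Emat i k →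
      ip Xdom (Phi (n_a := n_a) A M) (Lop Xdom K (Phi A N))
          / ip Xdom (Phi (n_a := n_a) A N) (one d n_s n_a)
        = lam A K i k l * (N i k : ℝ)) ∧
    (ip Xdom (Phi (n_a := n_a) A N) (Lop Xdom K (Phi A N))
          / ip Xdom (Phi (n_a := n_a) A N) (one d n_s n_a)
        = -∑ i : Fin n_s, ∑ k : Fin m, ∑ l ∈ Finset.univ.erase k,
            lam A K i k l * (N i k : ℝ)) ∧
    ((M ≠ N ∧ ¬∃ (i : Fin n_s) (k l : Fin m), k ≠ l ∧ M = N + Emat i l - Emat i k) →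
      ip Xdom (Phi (n_a := n_a) A M) (Lop Xdom K (Phi A N))
          / ip Xdom (Phi (n_a := n_a) A N) (one d n_s n_a) = 0) := by
  subst hAcover
  have hAfin : ∀ k, volume (A k) ≠ ⊤ := fun k =>
    ((measure_mono (Set.subset_iUnion A k)).trans_lt hXcomp.measure_lt_top).ne
  have hentry : ∀ M' : Fin n_s → Fin m → ℤ,
      ip (⋃ k, A k) (Phi (n_a := n_a) A M') (Lop (⋃ k, A k) K (Phi A N))
          / ip (⋃ k, A k) (Phi (n_a := n_a) A N) (one d n_s n_a) =
        movementEntry (lam A K) N M' := fun M' => by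
    rw [ip_Phi_Lop_Phi hAmeas hAdisj hAfin hApos hKint, mul_div_cancel_right₀ _
      (ip_Phi_one_pos hns hAmeas hAdisj hAfin hApos hXpos hXcomp.measure_lt_top.ne hN).ne']
  simp only [hentry]
  refine ⟨fun i k l hkl hMN => ?_, movementEntry_self_of_sum_eq_zero _ N fun i =>
    sum_lam_eq_zero hAmeas hAdisj (hKint i) (hmass i), fun ⟨hMN, hmove⟩ =>
    movementEntry_eq_zero _ N hMN hmove⟩
  rw [hMN, movementEntry_of_ne _ _ hkl]

/-- assuming mass conservation `∫_X ℓ_i(x,y) dx = 0` for a.e. `y ∈ X`,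
the matrix representation `L̂_{NM} = ⟨Φ_M, L Φ_N⟩/⟨Φ_N, 𝟙⟩` of the projected movement
generator is: `λ_i^{(kl)} N_i^{(k)}` if `M = N + E_i^{(l)} − E_i^{(k)}` with `k ≠ l`;
`−∑_i ∑_{k ≠ l} λ_i^{(kl)} N_i^{(k)}` if `M = N`; and `0` otherwise. -/
theorem statement6 (d m n_s n_a : ℕ) (hns : 1 ≤ n_s) (hna : 1 ≤ n_a)
    (Xdom : Set (E d)) (hXcomp : IsCompact Xdom) (hXpos : 0 < volume Xdom)
    (A : Fin m → Set (E d)) (hAmeas : ∀ k, MeasurableSet (A k))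
    (hAdisj : Pairwise (Disjoint on A)) (hApos : ∀ k, 0 < volume (A k))
    (hAcover : (⋃ k, A k) = Xdom)
    (K : Fin n_s → E d → E d → ℝ)
    (hKint : ∀ i, IntegrableOn (fun q : E d × E d => K i q.1 q.2) (Xdom ×ˢ Xdom))
    (hmass : ∀ i, ∀ᵐ y ∂(volume.restrict Xdom), ∫ x in Xdom, K i x y = 0)
    (N M : Fin n_s → Fin m → ℤ)
    (hN : N ∈ Mset n_s m n_a) (hM : M ∈ Mset n_s m n_a) :
    (∀ (i : Fin n_s) (k l : Fin m), k ≠ l → M = N + Emat i l - Emat i k →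
      ip Xdom (Phi (n_a := n_a) A M) (Lop Xdom K (Phi A N))
          / ip Xdom (Phi (n_a := n_a) A N) (one d n_s n_a)
        = lam A K i k l * (N i k : ℝ)) ∧
    (ip Xdom (Phi (n_a := n_a) A N) (Lop Xdom K (Phi A N))
          / ip Xdom (Phi (n_a := n_a) A N) (one d n_s n_a)
        = -∑ i : Fin n_s, ∑ k : Fin m, ∑ l ∈ Finset.univ.erase k,
            lam A K i k l * (N i k : ℝ)) ∧
    ((M ≠ N ∧ ¬∃ (i : Fin n_s) (k l : Fin m), k ≠ l ∧ M = N + Emat i l - Emat i k) →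
      ip Xdom (Phi (n_a := n_a) A M) (Lop Xdom K (Phi A N))
          / ip Xdom (Phi (n_a := n_a) A N) (one d n_s n_a) = 0) :=
  statement6_general d m n_s n_a hns Xdom hXcomp hXpos A hAmeas hAdisj hApos hAcover K hKint hmass N
    M hN

end ABMFormal
end

section
/- For all M, N ∈ M_{n_a}, ⟨Φ_M, L Φ_N⟩ = ∑_{i=1}^{n_s} ∑_{k,l=1}^{m} λ_i^{(kl)} N_i^{(k)} ⟨Φ_{M − E_i^{(l)} + E_i^{(k)}}, Φ_N⟩, with the convention Φ_J := 0 for J ∉ M_{n_a}. -/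
/-!
Cut `X^{n_a}` into the boxes `A_{c 1} × ⋯ × A_{c n_a}` indexed by cell assignments `c`. On a
box every `Φ_J(·, S)` is constant, equal to `1` iff the occupancy matrix of `(S, c)` is `J`, and
for almost every `X` in it the `α`-th summand of `(L Φ_N)(X, S)` depends on `x_α` only: it is
`∑_l [moving α to cell l gives occupancy N] ∫_{A_l} ℓ_{s_α}(x_α, y) dy`. Integrating box by box
turns both sides into finite sums over `(S, c)`. These are matched by the involution
`(c, l) ↦ (c with α moved to l, c α)`: moving an agent of status `i` from cell `k` to cell `l`
changes the occupancy by `E_i^{(l)} - E_i^{(k)}`, and the factor `N_i^{(k)}` counts the agents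
`α` of status `i` in cell `k` that can make the move.
-/

open MeasureTheory Finset Function

namespace ABMFormal

theorem integral_comp_eval_pi {ι : Type*} [Fintype ι] [DecidableEq ι] {X : ι → Type*}
    [∀ i, MeasurableSpace (X i)] {μ : ∀ i, Measure (X i)} [∀ i, SigmaFinite (μ i)]
    {F : Type*} [NormedAddCommGroup F] [NormedSpace ℝ F] {i : ι} {f : X i → F}
    (hf : AEStronglyMeasurable f (μ i)) :
    ∫ x, f (x i) ∂Measure.pi μ = (∏ j ∈ univ.erase i, (μ j Set.univ).toReal) • ∫ x, f x ∂μ i := by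
  have hmap := Measure.pi_map_eval μ i
  rw [← integral_map (measurable_pi_apply i).aemeasurable (hmap ▸ hf.smul_measure _), hmap,
    integral_smul_measure, ENNReal.toReal_prod]

theorem sum_sum_update_swap {ι β R : Type*} [Fintype ι] [DecidableEq ι] [Fintype β]
    [AddCommMonoid R] (α : ι) (F : (ι → β) → β → R) :
    ∑ c, ∑ l, F (update c α l) (c α) = ∑ c, ∑ l, F c l := by
  simp only [← Fintype.sum_prod_type']
  exact Equiv.sum_comp
    (Function.Involutive.toPerm (fun p : (ι → β) × β => (update p.1 α p.2, p.1 α)) fun p => by simp)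
    fun p => F p.1 p.2

theorem sum_comm₄ {α β γ δ R : Type*} [Fintype α] [Fintype β] [Fintype γ] [Fintype δ]
    [AddCommMonoid R] (f : α → β → γ → δ → R) :
    ∑ a, ∑ b, ∑ c, ∑ e, f a b c e = ∑ b, ∑ c, ∑ e, ∑ a, f a b c e := by
  rw [sum_comm]
  refine sum_congr rfl fun b _ => ?_
  rw [sum_comm]
  exact sum_congr rfl fun c _ => sum_comm

theorem prod_comp_update {ι β R : Type*} [Fintype ι] [DecidableEq ι] [CommMonoid R] (v : β → R)
    (c : ι → β) (α : ι) (l : β) :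
    ∏ i, v (update c α l i) = v l * ∏ i ∈ univ.erase α, v (c i) := by
  rw [← mul_prod_erase _ _ (mem_univ α), update_self,
    prod_congr rfl fun i hi => by rw [update_of_ne (ne_of_mem_erase hi)]]

section Occupancy

variable {n_a n_s m : ℕ}

-- `c β` is the cell of agent `β`.
def occupancy (S : Fin n_a → Fin n_s) (c : Fin n_a → Fin m) : Fin n_s → Fin m → ℤ :=
  ∑ β, Emat (S β) (c β)

theorem occupancy_apply (S : Fin n_a → Fin n_s) (c : Fin n_a → Fin m) (i : Fin n_s) (k : Fin m) :
    occupancy S c i k = ∑ β, if S β = i ∧ c β = k then 1 else 0 := by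
  simp [occupancy, Emat, Finset.sum_apply, eq_comm]

theorem occupancy_update (S : Fin n_a → Fin n_s) (c : Fin n_a → Fin m) (α : Fin n_a) (l : Fin m) :
    occupancy S (update c α l) = occupancy S c - Emat (S α) (c α) + Emat (S α) l := by
  simp only [occupancy]
  rw [← add_sum_erase _ _ (mem_univ α), ← add_sum_erase _ _ (mem_univ α), update_self,
    sum_congr rfl fun β hβ => by rw [update_of_ne (ne_of_mem_erase hβ)]]
  abel

theorem occupancy_update_eq_iff {S : Fin n_a → Fin n_s} {c : Fin n_a → Fin m} {α : Fin n_a}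
    {l : Fin m} {M : Fin n_s → Fin m → ℤ} :
    occupancy S (update c α l) = M - Emat (S α) (c α) + Emat (S α) l ↔ occupancy S c = M := by
  rw [occupancy_update, add_left_inj, sub_left_inj]

theorem sum_occupancy_mul (S : Fin n_a → Fin n_s) (c : Fin n_a → Fin m) (g : Fin n_s → Fin m → ℝ) :
    ∑ i, ∑ k, (occupancy S c i k : ℝ) * g i k = ∑ α, g (S α) (c α) := by
  simp only [occupancy_apply, Int.cast_sum, Int.cast_ite, Int.cast_one, Int.cast_zero, sum_mul,
    ite_mul, one_mul, zero_mul]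
  rw [sum_congr rfl fun i _ => sum_comm, sum_comm]
  simp [ite_and]

theorem sum_occupancy_moves (S : Fin n_a → Fin n_s) (v : Fin m → ℝ)
    (r : Fin n_s → Fin m → Fin m → ℝ) (M N : Fin n_s → Fin m → ℤ) :
    ∑ c : Fin n_a → Fin m, ∑ α, ∑ l, (if occupancy S c = M then (1 : ℝ) else 0) *
        (if occupancy S (update c α l) = N then 1 else 0) * r (S α) l (c α) *
          ∏ β, v (update c α l β)
      = ∑ i, ∑ k, ∑ l, r i k l * N i k * ∑ c : Fin n_a → Fin m,
          (if occupancy S c = M - Emat i l + Emat i k then (1 : ℝ) else 0) *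
            (if occupancy S c = N then 1 else 0) * ∏ β, v (c β) := by
  set T : (Fin n_a → Fin m) → Fin n_a → Fin m → ℝ := fun c α l =>
    (if occupancy S c = N then 1 else 0) * (∏ β, v (c β)) *
      ((if occupancy S c = M - Emat (S α) l + Emat (S α) (c α) then 1 else 0) * r (S α) (c α) l)
    with hT
  calc _ = ∑ α, ∑ c : Fin n_a → Fin m, ∑ l, T (update c α l) α (c α) := by
        rw [sum_comm]
        refine sum_congr rfl fun α _ => sum_congr rfl fun c _ => sum_congr rfl fun l _ => ?_
        simp only [hT, occupancy_update_eq_iff, update_self]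
        ring
    _ = ∑ α, ∑ c : Fin n_a → Fin m, ∑ l, T c α l :=
        sum_congr rfl fun α _ => sum_sum_update_swap α fun c l => T c α l
    _ = ∑ c : Fin n_a → Fin m, ∑ α, ∑ l, T c α l := sum_comm
    _ = ∑ c : Fin n_a → Fin m, (if occupancy S c = N then 1 else 0) * (∏ β, v (c β)) *
          ∑ i, ∑ k, (occupancy S c i k : ℝ) * ∑ l,
            (if occupancy S c = M - Emat i l + Emat i k then 1 else 0) * r i k l := by
        refine sum_congr rfl fun c _ => ?_
        rw [sum_occupancy_mul]
        simp only [hT, mul_sum]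
    _ = _ := by
        simp only [mul_sum]
        refine (sum_comm₄ _).trans (sum_congr rfl fun i _ => sum_congr rfl fun k _ =>
          sum_congr rfl fun l _ => sum_congr rfl fun c _ => ?_)
        by_cases h : occupancy S c = N
        · subst h
          simp only [if_true]
          ring
        · simp [h]

end Occupancy

section Cells

variable {d m n_s n_a : ℕ} {Xdom : Set (E d)} {A : Fin m → Set (E d)}

structure IsCellPartition (Xdom : Set (E d)) (A : Fin m → Set (E d)) : Prop where
  measurableSet : ∀ k, MeasurableSet (A k)
  pairwise_disjoint : Pairwise (Disjoint on A)
  iUnion_eq : ⋃ k, A k = Xdom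
  volume_ne_top : ∀ k, volume (A k) ≠ ⊤

theorem IsCellPartition.subset (hA : IsCellPartition Xdom A) (k : Fin m) : A k ⊆ Xdom :=
  hA.iUnion_eq ▸ Set.subset_iUnion A k

theorem IsCellPartition.mem_iff (hA : IsCellPartition Xdom A) {x : E d} {k : Fin m}
    (hx : x ∈ A k) {l : Fin m} : x ∈ A l ↔ l = k :=
  ⟨fun hl => by_contra fun hlk => Set.disjoint_left.mp (hA.pairwise_disjoint hlk) hl hx,
    fun h => h ▸ hx⟩

def box (A : Fin m → Set (E d)) (c : Fin n_a → Fin m) : Set (Fin n_a → E d) :=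
  Set.univ.pi fun β => A (c β)

theorem measurableSet_box (hA : IsCellPartition Xdom A) (c : Fin n_a → Fin m) :
    MeasurableSet (box A c) :=
  .univ_pi fun β => hA.measurableSet (c β)

theorem volume_box (c : Fin n_a → Fin m) : volume (box A c) = ∏ β, volume (A (c β)) :=
  volume_pi_pi _

theorem volume_restrict_box (c : Fin n_a → Fin m) :
    volume.restrict (box A c) = Measure.pi fun β => volume.restrict (A (c β)) := by
  rw [box, volume_pi, Measure.restrict_pi_pi]

theorem posSet_eq_iUnion_box (hA : IsCellPartition Xdom A) :
    posSet Xdom n_a = ⋃ c : Fin n_a → Fin m, box A c := by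
  ext X
  simp only [posSet, box, Set.mem_iUnion, Set.mem_univ_pi, ← hA.iUnion_eq]
  exact Classical.skolem

theorem pairwise_disjoint_box (hA : IsCellPartition Xdom A) :
    Pairwise (Disjoint on box (n_a := n_a) A) := by
  intro c c' hcc'
  obtain ⟨β, hβ⟩ := Function.ne_iff.mp hcc'
  exact Set.disjoint_left.mpr fun X hX hX' =>
    hβ ((hA.mem_iff (hX β trivial)).mp (hX' β trivial)).symm

theorem update_mem_box {c : Fin n_a → Fin m} {X : Fin n_a → E d} (hX : X ∈ box A c)
    (α : Fin n_a) {y : E d} {l : Fin m} (hy : y ∈ A l) :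
    update X α y ∈ box A (update c α l) := by
  intro β _
  rcases eq_or_ne β α with rfl | hβ
  · simpa using hy
  · simpa [hβ] using hX β trivial

theorem occ_eq_occupancy (hA : IsCellPartition Xdom A) {c : Fin n_a → Fin m}
    {X : Fin n_a → E d} (hX : X ∈ box A c) (S : Fin n_a → Fin n_s) (i : Fin n_s) (k : Fin m) :
    (occ A X S i k : ℤ) = occupancy S c i k := by
  have hset : {α | X α ∈ A k ∧ S α = i} = ↑(univ.filter fun β => S β = i ∧ c β = k) := by
    ext β
    simp [hA.mem_iff (hX β trivial), and_comm, eq_comm]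
  rw [occ, hset, Set.ncard_coe_finset, card_filter, occupancy_apply]
  push_cast
  rfl

theorem Phi_of_mem_box (hA : IsCellPartition Xdom A) {c : Fin n_a → Fin m}
    {X : Fin n_a → E d} (hX : X ∈ box A c) (W : Fin n_s → Fin m → ℤ) (S : Fin n_a → Fin n_s) :
    Phi A W X S = if occupancy S c = W then 1 else 0 := by
  simp only [Phi, occ_eq_occupancy hA hX, funext_iff]

end Cells

section Integrals

variable {d m n_s n_a : ℕ} {Xdom : Set (E d)} {A : Fin m → Set (E d)}

theorem setIntegral_posSet_eq_sum (hA : IsCellPartition Xdom A) {f : (Fin n_a → E d) → ℝ}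
    (hf : ∀ c, IntegrableOn f (box A c)) :
    ∫ X in posSet Xdom n_a, f X = ∑ c, ∫ X in box A c, f X := by
  rw [posSet_eq_iUnion_box hA]
  exact integral_iUnion_fintype (measurableSet_box hA) (pairwise_disjoint_box hA) hf

theorem integrableOn_box_comp_eval (hA : IsCellPartition Xdom A) (c : Fin n_a → Fin m)
    (α : Fin n_a) {g : E d → ℝ} (hg : IntegrableOn g (A (c α))) :
    IntegrableOn (fun X => g (X α)) (box A c) := by
  have := fun k => isFiniteMeasure_restrict.mpr (hA.volume_ne_top k)
  rw [IntegrableOn, volume_restrict_box]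
  exact integrable_comp_eval hg

theorem setIntegral_box_comp_eval (c : Fin n_a → Fin m) (α : Fin n_a) {g : E d → ℝ}
    (hg : AEStronglyMeasurable g (volume.restrict (A (c α)))) :
    ∫ X in box A c, g (X α)
      = (∏ β ∈ univ.erase α, (volume (A (c β))).toReal) * ∫ x in A (c α), g x := by
  rw [volume_restrict_box, integral_comp_eval_pi hg]
  simp

theorem ae_box_comp_eval (hA : IsCellPartition Xdom A) {p : E d → Prop}
    (hp : ∀ᵐ x ∂volume.restrict Xdom, p x) (c : Fin n_a → Fin m) (α : Fin n_a) :
    ∀ᵐ X ∂volume.restrict (box A c), p (X α) := by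
  rw [volume_restrict_box]
  exact (Measure.quasiMeasurePreserving_eval _ α).ae
    (ae_restrict_of_ae_restrict_of_subset (hA.subset (c α)) hp)

theorem setIntegral_Phi_mul_Phi (hA : IsCellPartition Xdom A) (W N : Fin n_s → Fin m → ℤ)
    (S : Fin n_a → Fin n_s) :
    ∫ X in posSet Xdom n_a, Phi A W X S * Phi A N X S
      = ∑ c : Fin n_a → Fin m, (if occupancy S c = W then (1 : ℝ) else 0) *
          (if occupancy S c = N then 1 else 0) * ∏ β, (volume (A (c β))).toReal := by
  have hconst : ∀ c, Set.EqOn (fun X => Phi A W X S * Phi A N X S)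
      (fun _ => (if occupancy S c = W then (1 : ℝ) else 0) * if occupancy S c = N then 1 else 0)
      (box A c) := fun c X hX => by
    simp only [Phi_of_mem_box hA hX]
  have hfin : ∀ c : Fin n_a → Fin m, volume (box A c) ≠ ⊤ := fun c => by
    rw [volume_box]
    exact ENNReal.prod_ne_top fun β _ => hA.volume_ne_top (c β)
  rw [setIntegral_posSet_eq_sum hA fun c =>
    (integrableOn_const (hfin c)).congr_fun (hconst c).symm (measurableSet_box hA c)]
  refine sum_congr rfl fun c _ => ?_
  rw [setIntegral_congr_fun (measurableSet_box hA c) (hconst c), setIntegral_const,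
    measureReal_def, volume_box, ENNReal.toReal_prod, smul_eq_mul, mul_comm]

end Integrals

section Movement

variable {d m n_s n_a : ℕ} {Xdom : Set (E d)} {A : Fin m → Set (E d)}
  {K : Fin n_s → E d → E d → ℝ}

theorem setIntegral_mul_Phi_update (hA : IsCellPartition Xdom A) {c : Fin n_a → Fin m}
    {X : Fin n_a → E d} (hX : X ∈ box A c) (N : Fin n_s → Fin m → ℤ) (S : Fin n_a → Fin n_s)
    (α : Fin n_a) {g : E d → ℝ} (hg : IntegrableOn g Xdom) :
    ∫ y in Xdom, g y * Phi A N (update X α y) S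
      = ∑ l, (if occupancy S (update c α l) = N then (1 : ℝ) else 0) * ∫ y in A l, g y := by
  have hcell : ∀ l, Set.EqOn (fun y => g y * Phi A N (update X α y) S)
      (fun y => (if occupancy S (update c α l) = N then (1 : ℝ) else 0) * g y) (A l) :=
    fun l y hy => by simp only [Phi_of_mem_box hA (update_mem_box hX α hy), mul_comm]
  rw [← hA.iUnion_eq, integral_iUnion_fintype hA.measurableSet hA.pairwise_disjoint fun l =>
    IntegrableOn.congr_fun ((hg.mono_set (hA.subset l)).const_mul _) (hcell l).symm
      (hA.measurableSet l)]
  exact sum_congr rfl fun l _ => by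
    rw [setIntegral_congr_fun (hA.measurableSet l) (hcell l), integral_const_mul]

theorem integrableOn_setIntegral_cell (hA : IsCellPartition Xdom A) {κ : E d → E d → ℝ}
    (hκ : Integrable (uncurry κ) ((volume.restrict Xdom).prod (volume.restrict Xdom)))
    (k l : Fin m) :
    IntegrableOn (fun x => ∫ y in A l, κ x y) (A k) :=
  (hκ.mono_measure (Measure.prod_mono (Measure.restrict_mono (hA.subset k) le_rfl)
    (Measure.restrict_mono (hA.subset l) le_rfl))).integral_prod_left

theorem setIntegral_setIntegral_eq_lam_mul (i : Fin n_s) (k : Fin m) {l : Fin m}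
    (hl : volume (A l) ≠ ⊤) :
    ∫ x in A k, ∫ y in A l, K i x y = lam A K i l k * (volume (A l)).toReal := by
  rcases eq_or_ne (volume (A l)) 0 with h0 | h0
  · simp [Measure.restrict_eq_zero.mpr h0, h0]
  · rw [lam, div_mul_cancel₀ _ (ENNReal.toReal_ne_zero.mpr ⟨h0, hl⟩)]

noncomputable def moveRate (A : Fin m → Set (E d)) (K : Fin n_s → E d → E d → ℝ)
    (N : Fin n_s → Fin m → ℤ) (S : Fin n_a → Fin n_s) (c : Fin n_a → Fin m) (α : Fin n_a)
    (x : E d) : ℝ :=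
  ∑ l, (if occupancy S (update c α l) = N then (1 : ℝ) else 0) * ∫ y in A l, K (S α) x y

theorem integrableOn_moveRate (hA : IsCellPartition Xdom A)
    (hK : ∀ i, Integrable (uncurry (K i)) ((volume.restrict Xdom).prod (volume.restrict Xdom)))
    (N : Fin n_s → Fin m → ℤ) (S : Fin n_a → Fin n_s)
    (c : Fin n_a → Fin m) (α : Fin n_a) (k : Fin m) :
    IntegrableOn (moveRate A K N S c α) (A k) :=
  integrable_finsetSum _ fun l _ => (integrableOn_setIntegral_cell hA (hK (S α)) k l).const_mul _

theorem setIntegral_moveRate (hA : IsCellPartition Xdom A)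
    (hK : ∀ i, Integrable (uncurry (K i)) ((volume.restrict Xdom).prod (volume.restrict Xdom)))
    (N : Fin n_s → Fin m → ℤ) (S : Fin n_a → Fin n_s)
    (c : Fin n_a → Fin m) (α : Fin n_a) (k : Fin m) :
    ∫ x in A k, moveRate A K N S c α x
      = ∑ l, (if occupancy S (update c α l) = N then (1 : ℝ) else 0) *
          ∫ x in A k, ∫ y in A l, K (S α) x y := by
  simp only [moveRate]
  rw [integral_finsetSum _ fun l _ =>
    (integrableOn_setIntegral_cell hA (hK (S α)) k l).const_mul _]
  simp only [integral_const_mul]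

theorem Lop_Phi_ae_eq_sum_moveRate (hA : IsCellPartition Xdom A)
    (hK : ∀ i, Integrable (uncurry (K i)) ((volume.restrict Xdom).prod (volume.restrict Xdom)))
    (N : Fin n_s → Fin m → ℤ) (S : Fin n_a → Fin n_s)
    (c : Fin n_a → Fin m) :
    ∀ᵐ X ∂volume.restrict (box A c),
      Lop Xdom K (Phi A N) X S = ∑ α, moveRate A K N S c α (X α) := by
  have hsec : ∀ᵐ x ∂volume.restrict Xdom, ∀ i, IntegrableOn (K i x) Xdom :=
    ae_all_iff.mpr fun i => (hK i).prod_right_ae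
  filter_upwards [ae_all_iff.mpr (ae_box_comp_eval hA hsec c),
    ae_restrict_mem (measurableSet_box hA c)] with X hsecX hX
  exact sum_congr rfl fun α _ => setIntegral_mul_Phi_update hA hX N S α (hsecX α (S α))

theorem Phi_mul_Lop_ae_eq (hA : IsCellPartition Xdom A)
    (hK : ∀ i, Integrable (uncurry (K i)) ((volume.restrict Xdom).prod (volume.restrict Xdom)))
    (M N : Fin n_s → Fin m → ℤ) (S : Fin n_a → Fin n_s) (c : Fin n_a → Fin m) :
    (fun X => Phi A M X S * Lop Xdom K (Phi A N) X S) =ᵐ[volume.restrict (box A c)]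
      fun X => (if occupancy S c = M then (1 : ℝ) else 0) * ∑ α, moveRate A K N S c α (X α) := by
  filter_upwards [Lop_Phi_ae_eq_sum_moveRate hA hK N S c,
    ae_restrict_mem (measurableSet_box hA c)] with X hL hX
  rw [hL, Phi_of_mem_box hA hX]

theorem integrableOn_box_Phi_mul_Lop (hA : IsCellPartition Xdom A)
    (hK : ∀ i, Integrable (uncurry (K i)) ((volume.restrict Xdom).prod (volume.restrict Xdom)))
    (M N : Fin n_s → Fin m → ℤ) (S : Fin n_a → Fin n_s) (c : Fin n_a → Fin m) :
    IntegrableOn (fun X => Phi A M X S * Lop Xdom K (Phi A N) X S) (box A c) :=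
  ((integrable_finsetSum _ fun α _ => integrableOn_box_comp_eval hA c α
    (integrableOn_moveRate hA hK N S c α (c α))).const_mul _).congr
    (Phi_mul_Lop_ae_eq hA hK M N S c).symm

theorem setIntegral_box_Phi_mul_Lop (hA : IsCellPartition Xdom A)
    (hK : ∀ i, Integrable (uncurry (K i)) ((volume.restrict Xdom).prod (volume.restrict Xdom)))
    (M N : Fin n_s → Fin m → ℤ) (S : Fin n_a → Fin n_s) (c : Fin n_a → Fin m) :
    ∫ X in box A c, Phi A M X S * Lop Xdom K (Phi A N) X S
      = ∑ α, ∑ l, (if occupancy S c = M then (1 : ℝ) else 0) *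
          (if occupancy S (update c α l) = N then 1 else 0) * lam A K (S α) l (c α) *
            ∏ β, (volume (A (update c α l β))).toReal := by
  rw [integral_congr_ae (Phi_mul_Lop_ae_eq hA hK M N S c), integral_const_mul,
    integral_finsetSum _ fun α _ => integrableOn_box_comp_eval hA c α
      (integrableOn_moveRate hA hK N S c α (c α)), mul_sum]
  refine sum_congr rfl fun α _ => ?_
  rw [setIntegral_box_comp_eval c α (integrableOn_moveRate hA hK N S c α (c α)).1,
    setIntegral_moveRate hA hK, mul_sum, mul_sum]
  refine sum_congr rfl fun l _ => ?_
  rw [setIntegral_setIntegral_eq_lam_mul _ _ (hA.volume_ne_top l),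
    prod_comp_update fun k => (volume (A k)).toReal]
  ring

theorem setIntegral_Phi_mul_Lop (hA : IsCellPartition Xdom A)
    (hK : ∀ i, Integrable (uncurry (K i)) ((volume.restrict Xdom).prod (volume.restrict Xdom)))
    (M N : Fin n_s → Fin m → ℤ) (S : Fin n_a → Fin n_s) :
    ∫ X in posSet Xdom n_a, Phi A M X S * Lop Xdom K (Phi A N) X S
      = ∑ c : Fin n_a → Fin m, ∑ α, ∑ l, (if occupancy S c = M then (1 : ℝ) else 0) *
          (if occupancy S (update c α l) = N then 1 else 0) * lam A K (S α) l (c α) *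
            ∏ β, (volume (A (update c α l β))).toReal := by
  rw [setIntegral_posSet_eq_sum hA (integrableOn_box_Phi_mul_Lop hA hK M N S)]
  exact sum_congr rfl fun c _ => setIntegral_box_Phi_mul_Lop hA hK M N S c

end Movement

theorem statement7_general (d m n_s n_a : ℕ)
    (Xdom : Set (E d)) (hXcomp : IsCompact Xdom)
    (A : Fin m → Set (E d)) (hAmeas : ∀ k, MeasurableSet (A k))
    (hAdisj : Pairwise (Disjoint on A))
    (hAcover : (⋃ k, A k) = Xdom)
    (K : Fin n_s → E d → E d → ℝ)
    (hKint : ∀ i, IntegrableOn (fun q : E d × E d => K i q.1 q.2) (Xdom ×ˢ Xdom))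
    (M N : Fin n_s → Fin m → ℤ) :
    ip Xdom (Phi (n_a := n_a) A M) (Lop Xdom K (Phi A N))
      = ∑ i : Fin n_s, ∑ k : Fin m, ∑ l : Fin m,
          lam A K i k l * (N i k : ℝ) *
            ip Xdom (Phi (n_a := n_a) A (M - Emat i l + Emat i k)) (Phi A N) := by
  have hA : IsCellPartition Xdom A :=
    { measurableSet := hAmeas
      pairwise_disjoint := hAdisj
      iUnion_eq := hAcover
      volume_ne_top := fun k => ne_top_of_le_ne_top hXcomp.measure_lt_top.ne
        (measure_mono (hAcover ▸ Set.subset_iUnion A k)) }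
  have hK : ∀ i, Integrable (uncurry (K i))
      ((volume.restrict Xdom).prod (volume.restrict Xdom)) := fun i => by
    rw [Measure.prod_restrict, ← Measure.volume_eq_prod]
    exact hKint i
  simp only [ip, setIntegral_Phi_mul_Lop hA hK, setIntegral_Phi_mul_Phi hA]
  rw [sum_congr rfl fun S _ =>
    sum_occupancy_moves S (fun k => (volume (A k)).toReal) (lam A K) M N]
  simp only [mul_sum]
  rw [sum_comm₄]
  exact sum_congr rfl fun i _ => sum_congr rfl fun k _ => sum_congr rfl fun l _ =>
    sum_congr rfl fun S _ => sum_congr rfl fun c _ => mul_left_comm _ _ _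

/-- for all `M, N ∈ M_{n_a}`,
`⟨Φ_M, L Φ_N⟩ = ∑_i ∑_{k,l} λ_i^{(kl)} N_i^{(k)} ⟨Φ_{M − E_i^{(l)} + E_i^{(k)}}, Φ_N⟩`,
with the convention `Φ_J := 0` for `J ∉ M_{n_a}`. -/
theorem statement7 (d m n_s n_a : ℕ) (hns : 1 ≤ n_s) (hna : 1 ≤ n_a)
    (Xdom : Set (E d)) (hXcomp : IsCompact Xdom) (hXpos : 0 < volume Xdom)
    (A : Fin m → Set (E d)) (hAmeas : ∀ k, MeasurableSet (A k))
    (hAdisj : Pairwise (Disjoint on A)) (hApos : ∀ k, 0 < volume (A k))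
    (hAcover : (⋃ k, A k) = Xdom)
    (K : Fin n_s → E d → E d → ℝ)
    (hKint : ∀ i, IntegrableOn (fun q : E d × E d => K i q.1 q.2) (Xdom ×ˢ Xdom))
    (M N : Fin n_s → Fin m → ℤ)
    (hM : M ∈ Mset n_s m n_a) (hN : N ∈ Mset n_s m n_a) :
    ip Xdom (Phi (n_a := n_a) A M) (Lop Xdom K (Phi A N))
      = ∑ i : Fin n_s, ∑ k : Fin m, ∑ l : Fin m,
          lam A K i k l * (N i k : ℝ) *
            ip Xdom (Phi (n_a := n_a) A (M - Emat i l + Emat i k)) (Phi A N) :=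
  statement7_general d m n_s n_a Xdom hXcomp A hAmeas hAdisj hAcover K hKint M N

end ABMFormal
end
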